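/- Let X ⊆ E be a nonempty closed convex set with diameter at most D, Φ : E → ℝ differentiable with ∇Φ L-Lipschitz on X, ‖∇Φ(x)‖ ≤ G for all x ∈ X, and Φ_min ≤ Φ(x) ≤ Φ_max for all x ∈ X. Suppose F(x) = −∇Φ(x) + R(x) with ‖R(x)‖ ≤ ε for all x ∈ X. Let 0 < η ≤ 1/L, T ≥ 1, and let directions g_t ∈ E with ‖g_t − ∇Φ(x_t)‖ ≤ δ̄ for all t, and iterates x₀ ∈ X, x_{t+1} ∈ X satisfy for each t the projection variational inequality ⟨(x_t + ηg_t) − x_{t+1}, z − x_{t+1}⟩ ≤ 0 for all z ∈ X. Then there exists t̂ ∈ {0,…,T−1} such that Gap(x_{t̂}) = sup_{u ∈ X} ⟨F(x_{t̂}), x_{t̂} − u⟩ ≤ (D + η(G + δ̄))·√(4(Φ_max − Φ_min)/(Tη) + 4δ̄²) + D(ε + δ̄). -/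

import Mathlib

/-!
Each projected step `r_t = x_{t+1} - x_t` satisfies `‖r_t‖² ≤ η ⟪g_t, r_t⟫` (test the projection
inequality at `z = x_t`). Combined with the quadratic lower bound for an `L`-smooth `Φ` and
`ηL ≤ 1`, this makes `Φ` increase by at least `‖r_t‖²/(4η) - ηδ̄²` per step, so telescoping over
`T` steps yields an iterate with `‖r_t‖ ≤ η √(4(Φ_max - Φ_min)/(Tη) + 4δ̄²)`. Testing the projection
inequality at an arbitrary `u ∈ X` then bounds the gap at that iterate by a multiple of `‖r_t‖/η`
plus the errors coming from `δ̄` and `R`.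
-/

open RealInnerProductSpace

section

variable {E : Type*} [NormedAddCommGroup E] [InnerProductSpace ℝ E]

theorem Convex.quadratic_lower_bound_of_lipschitz_gradient [CompleteSpace E] {s : Set E}
    (hs : Convex ℝ s) {Φ : E → ℝ} (hΦ : Differentiable ℝ Φ) {L : ℝ}
    (hlip : ∀ a ∈ s, ∀ b ∈ s, ‖gradient Φ a - gradient Φ b‖ ≤ L * ‖a - b‖)
    {a b : E} (ha : a ∈ s) (hb : b ∈ s) :
    Φ a + ⟪gradient Φ a, b - a⟫ - L / 2 * ‖b - a‖ ^ 2 ≤ Φ b := by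
  set v := b - a
  -- Compare the endpoints of `ψ`, which is monotone on `[0, 1]`: `ψ' ≥ 0` there by
  -- Cauchy–Schwarz and the Lipschitz bound along the segment.
  let ψ : ℝ → ℝ := fun s => Φ (a + s • v) - s * ⟪gradient Φ a, v⟫ + L / 2 * s ^ 2 * ‖v‖ ^ 2
  let ψ' : ℝ → ℝ := fun s =>
    ⟪gradient Φ (a + s • v), v⟫ - ⟪gradient Φ a, v⟫ + L * s * ‖v‖ ^ 2
  have hψ : ∀ s, HasDerivAt ψ (ψ' s) s := by
    intro s
    have hline : HasDerivAt (fun s : ℝ => a + s • v) v s := by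
      simpa using ((hasDerivAt_id s).smul_const v).const_add a
    have hΦline := (hΦ (a + s • v)).hasGradientAt.hasFDerivAt.comp_hasDerivAt s hline
    refine ((hΦline.sub ((hasDerivAt_id s).mul_const ⟪gradient Φ a, v⟫)).add
      ((((hasDerivAt_id s).pow 2).const_mul (L / 2)).mul_const (‖v‖ ^ 2))).congr_deriv ?_
    simp only [ψ', InnerProductSpace.toDual_apply_apply, id]
    ring
  have hψ'_nonneg : ∀ τ ∈ interior (Set.Icc (0 : ℝ) 1), 0 ≤ ψ' τ := by
    intro τ hτ
    rw [interior_Icc] at hτ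
    have hseg := hlip a ha _ (hs.add_smul_sub_mem ha hb ⟨hτ.1.le, hτ.2.le⟩)
    rw [sub_add_cancel_left, norm_neg, norm_smul, Real.norm_of_nonneg hτ.1.le] at hseg
    have hcs := real_inner_le_norm (gradient Φ a - gradient Φ (a + τ • v)) v
    rw [inner_sub_left] at hcs
    have := mul_le_mul_of_nonneg_right hseg (norm_nonneg v)
    simp only [ψ']
    nlinarith
  have hmono : MonotoneOn ψ (Set.Icc 0 1) :=
    monotoneOn_of_hasDerivWithinAt_nonneg (convex_Icc 0 1)
      (fun s _ => (hψ s).continuousAt.continuousWithinAt)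
      (fun s _ => (hψ s).hasDerivWithinAt) hψ'_nonneg
  have h01 := hmono (by simp) (by simp) zero_le_one
  simp only [ψ, zero_smul, add_zero, one_smul, zero_mul, sub_zero, one_pow, mul_one, one_mul,
    ne_eq, OfNat.ofNat_ne_zero, not_false_eq_true, zero_pow, mul_zero, v, add_sub_cancel] at h01
  linarith

theorem norm_sub_sq_le_inner_of_proj {X : Set E} {x p g : E} {η : ℝ} (hx : x ∈ X)
    (hproj : ∀ z ∈ X, ⟪(x + η • g) - p, z - p⟫ ≤ 0) : ‖p - x‖ ^ 2 ≤ η * ⟪g, p - x⟫ := by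
  have h := hproj x hx
  rw [show x + η • g - p = η • g - (p - x) by abel, show x - p = -(p - x) by abel,
    inner_neg_right, inner_sub_left, real_inner_smul_left, real_inner_self_eq_norm_sq] at h
  linarith

theorem inner_sub_le_of_proj {x p g v u : E} {η ρ D G δ : ℝ} (hη : 0 < η)
    (hux : ‖u - x‖ ≤ D) (hup : ‖u - p‖ ≤ D) (hproj : ⟪(x + η • g) - p, u - p⟫ ≤ 0)
    (hg : ‖g - v‖ ≤ δ) (hv : ‖v‖ ≤ G) (hpx : ‖p - x‖ ≤ η * ρ) :
    ⟪v, u - x⟫ ≤ δ * D + (D + η * (G + δ)) * ρ := by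
  have hsplit : ⟪v, u - x⟫ = ⟪v - g, u - x⟫ + ⟪g, u - p⟫ + ⟪g, p - x⟫ := by
    simp only [inner_sub_left, inner_sub_right]
    ring
  have hδ : 0 ≤ δ := (norm_nonneg _).trans hg
  have herr : ⟪v - g, u - x⟫ ≤ δ * D :=
    (real_inner_le_norm _ _).trans (mul_le_mul (norm_sub_rev v g ▸ hg) hux (norm_nonneg _) hδ)
  have hproj' : η * ⟪g, u - p⟫ ≤ ‖p - x‖ * D := by
    rw [show x + η • g - p = η • g - (p - x) by abel, inner_sub_left, real_inner_smul_left] at hproj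
    have := (real_inner_le_norm (p - x) (u - p)).trans
      (mul_le_mul_of_nonneg_left hup (norm_nonneg _))
    linarith
  have hgnorm : ‖g‖ ≤ G + δ := (norm_le_norm_add_norm_sub' g v).trans (add_le_add hv hg)
  have hstep : ⟪g, p - x⟫ ≤ (G + δ) * ‖p - x‖ :=
    (real_inner_le_norm _ _).trans (mul_le_mul_of_nonneg_right hgnorm (norm_nonneg _))
  have hcoef : 0 ≤ D + η * (G + δ) := by
    have := (norm_nonneg _).trans hux
    have := (norm_nonneg _).trans hv
    positivity
  refine le_of_mul_le_mul_left ?_ hη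
  rw [hsplit]
  nlinarith [mul_le_mul_of_nonneg_left herr hη.le, mul_le_mul_of_nonneg_left hstep hη.le,
    mul_le_mul_of_nonneg_left hpx hcoef]

theorem norm_sub_sq_le_of_proj_of_lipschitz_gradient [CompleteSpace E] {X : Set E}
    (hX : Convex ℝ X) {Φ : E → ℝ} (hΦ : Differentiable ℝ Φ) {L : ℝ}
    (hlip : ∀ a ∈ X, ∀ b ∈ X, ‖gradient Φ a - gradient Φ b‖ ≤ L * ‖a - b‖)
    {x p g : E} {η δ : ℝ} (hx : x ∈ X) (hp : p ∈ X)
    (hproj : ∀ z ∈ X, ⟪(x + η • g) - p, z - p⟫ ≤ 0) (hg : ‖g - gradient Φ x‖ ≤ δ)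
    (hη : 0 ≤ η) (hηL : η * L ≤ 1) :
    ‖p - x‖ ^ 2 ≤ 4 * η * (Φ p - Φ x) + 4 * η ^ 2 * δ ^ 2 := by
  have hdesc := hX.quadratic_lower_bound_of_lipschitz_gradient hΦ hlip hx hp
  have hstep := norm_sub_sq_le_inner_of_proj hx hproj
  have herr : ⟪g - gradient Φ x, p - x⟫ ≤ δ * ‖p - x‖ :=
    (real_inner_le_norm _ _).trans (mul_le_mul_of_nonneg_right hg (norm_nonneg _))
  rw [inner_sub_left] at herr
  nlinarith [sq_nonneg (‖p - x‖ - 2 * η * δ), mul_le_mul_of_nonneg_right hηL (sq_nonneg ‖p - x‖),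
    mul_le_mul_of_nonneg_left hdesc hη]

end

theorem exists_lt_le_of_le_mul_sub_add {a b : ℕ → ℝ} {c e m M : ℝ} {T : ℕ} (hT : 0 < T)
    (hc : 0 ≤ c) (hab : ∀ t, a t ≤ c * (b (t + 1) - b t) + e) (hm : m ≤ b 0) (hM : b T ≤ M) :
    ∃ t < T, a t ≤ c * (M - m) / T + e := by
  have hsum : ∑ t ∈ Finset.range T, a t ≤ ∑ _t ∈ Finset.range T, (c * (M - m) / T + e) :=
    calc ∑ t ∈ Finset.range T, a t
        ≤ ∑ t ∈ Finset.range T, (c * (b (t + 1) - b t) + e) := Finset.sum_le_sum fun t _ => hab t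
      _ = c * (b T - b 0) + T * e := by
        rw [Finset.sum_add_distrib, ← Finset.mul_sum, Finset.sum_range_sub, Finset.sum_const,
          Finset.card_range, nsmul_eq_mul]
      _ ≤ c * (M - m) + T * e := by gcongr
      _ = ∑ _t ∈ Finset.range T, (c * (M - m) / T + e) := by
        rw [Finset.sum_const, Finset.card_range, nsmul_eq_mul]
        field_simp
  obtain ⟨t, ht, hle⟩ := Finset.exists_le_of_sum_le (Finset.nonempty_range_iff.mpr hT.ne') hsum
  exact ⟨t, Finset.mem_range.mp ht, hle⟩

theorem stmt_18_general {d : ℕ} (X : Set (EuclideanSpace ℝ (Fin d)))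
    (hconv : Convex ℝ X)
    (D : ℝ) (hD : ∀ a ∈ X, ∀ b ∈ X, ‖a - b‖ ≤ D)
    (Φ : EuclideanSpace ℝ (Fin d) → ℝ) (hΦ : Differentiable ℝ Φ)
    (L : ℝ) (hL : 0 < L)
    (hlip : ∀ a ∈ X, ∀ b ∈ X, ‖gradient Φ a - gradient Φ b‖ ≤ L * ‖a - b‖)
    (G : ℝ) (hG : ∀ y ∈ X, ‖gradient Φ y‖ ≤ G)
    (Φmin Φmax : ℝ) (hΦbd : ∀ y ∈ X, Φmin ≤ Φ y ∧ Φ y ≤ Φmax)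
    (F R : EuclideanSpace ℝ (Fin d) → EuclideanSpace ℝ (Fin d))
    (hF : ∀ y, F y = -gradient Φ y + R y)
    (ε : ℝ) (hR : ∀ y ∈ X, ‖R y‖ ≤ ε)
    (η : ℝ) (hη0 : 0 < η) (hη : η ≤ 1 / L)
    (T : ℕ) (hT : 1 ≤ T)
    (δbar : ℝ)
    (g : ℕ → EuclideanSpace ℝ (Fin d))
    (x : ℕ → EuclideanSpace ℝ (Fin d)) (hxX : ∀ t, x t ∈ X)
    (hg : ∀ t, ‖g t - gradient Φ (x t)‖ ≤ δbar)
    (hVI : ∀ t, ∀ z ∈ X,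
      ⟪(x t + η • g t) - x (t + 1), z - x (t + 1)⟫ ≤ 0) :
    ∃ that : ℕ, that < T ∧
      (⨆ u : X, ⟪F (x that), x that - (u : EuclideanSpace ℝ (Fin d))⟫) ≤
        (D + η * (G + δbar)) *
          Real.sqrt (4 * (Φmax - Φmin) / (T * η) + 4 * δbar ^ 2) +
        D * (ε + δbar) := by
  have hηL : η * L ≤ 1 := by rwa [le_div_iff₀ hL] at hη
  set S := 4 * (Φmax - Φmin) / (T * η) + 4 * δbar ^ 2
  have hT0 : (0 : ℝ) < T := by exact_mod_cast hT
  obtain ⟨t, ht, hsmall⟩ := exists_lt_le_of_le_mul_sub_add (a := fun t => ‖x (t + 1) - x t‖ ^ 2)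
    (b := fun t => Φ (x t)) hT (by positivity : 0 ≤ 4 * η)
    (fun t => norm_sub_sq_le_of_proj_of_lipschitz_gradient hconv hΦ hlip (hxX t) (hxX (t + 1))
      (hVI t) (hg t) hη0.le hηL)
    (hΦbd (x 0) (hxX 0)).1 (hΦbd (x T) (hxX T)).2
  have hS : 4 * η * (Φmax - Φmin) / T + 4 * η ^ 2 * δbar ^ 2 = η ^ 2 * S := by
    simp only [S]
    field_simp
  have hstep : ‖x (t + 1) - x t‖ ≤ η * √S := by
    rw [← Real.sqrt_sq hη0.le, ← Real.sqrt_mul (sq_nonneg η)]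
    exact Real.le_sqrt_of_sq_le (hsmall.trans hS.le)
  have : Nonempty X := ⟨⟨x 0, hxX 0⟩⟩
  refine ⟨t, ht, ciSup_le fun u => ?_⟩
  have hascent := inner_sub_le_of_proj hη0 (hD _ u.2 _ (hxX t)) (hD _ u.2 _ (hxX (t + 1)))
    (hVI t u u.2) (hg t) (hG _ (hxX t)) hstep
  have hres : ⟪R (x t), x t - u⟫ ≤ ε * D := (real_inner_le_norm _ _).trans
    (mul_le_mul (hR _ (hxX t)) (hD _ (hxX t) _ u.2) (norm_nonneg _)
      ((norm_nonneg _).trans (hR _ (hxX t))))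
  rw [hF, inner_add_left, inner_neg_left, ← inner_neg_right, neg_sub]
  linarith

/-- Effect of projection error: for inexact projected ascent with directions `g_t` satisfying
`‖g_t − ∇Φ(x_t)‖ ≤ δ̄`, `F = −∇Φ + R` with `‖R‖ ≤ ε` on `X`, and `0 < η ≤ 1/L`, some
iterate `x_t̂`, `t̂ < T`, satisfies
`Gap(x_t̂) ≤ (D + η(G + δ̄))·√(4(Φ_max − Φ_min)/(Tη) + 4δ̄²) + D(ε + δ̄)`. -/
theorem stmt_18 {d : ℕ} (X : Set (EuclideanSpace ℝ (Fin d)))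
    (hne : X.Nonempty) (hcl : IsClosed X) (hconv : Convex ℝ X)
    (D : ℝ) (hD : ∀ a ∈ X, ∀ b ∈ X, ‖a - b‖ ≤ D)
    (Φ : EuclideanSpace ℝ (Fin d) → ℝ) (hΦ : Differentiable ℝ Φ)
    (L : ℝ) (hL : 0 < L)
    (hlip : ∀ a ∈ X, ∀ b ∈ X, ‖gradient Φ a - gradient Φ b‖ ≤ L * ‖a - b‖)
    (G : ℝ) (hG : ∀ y ∈ X, ‖gradient Φ y‖ ≤ G)
    (Φmin Φmax : ℝ) (hΦbd : ∀ y ∈ X, Φmin ≤ Φ y ∧ Φ y ≤ Φmax)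
    (F R : EuclideanSpace ℝ (Fin d) → EuclideanSpace ℝ (Fin d))
    (hF : ∀ y, F y = -gradient Φ y + R y)
    (ε : ℝ) (hR : ∀ y ∈ X, ‖R y‖ ≤ ε)
    (η : ℝ) (hη0 : 0 < η) (hη : η ≤ 1 / L)
    (T : ℕ) (hT : 1 ≤ T)
    (δbar : ℝ)
    (g : ℕ → EuclideanSpace ℝ (Fin d))
    (x : ℕ → EuclideanSpace ℝ (Fin d)) (hxX : ∀ t, x t ∈ X)
    (hg : ∀ t, ‖g t - gradient Φ (x t)‖ ≤ δbar)
    (hVI : ∀ t, ∀ z ∈ X,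
      ⟪(x t + η • g t) - x (t + 1), z - x (t + 1)⟫ ≤ 0) :
    ∃ that : ℕ, that < T ∧
      (⨆ u : X, ⟪F (x that), x that - (u : EuclideanSpace ℝ (Fin d))⟫) ≤
        (D + η * (G + δbar)) *
          Real.sqrt (4 * (Φmax - Φmin) / (T * η) + 4 * δbar ^ 2) +
        D * (ε + δbar) :=
  stmt_18_general X hconv D hD Φ hΦ L hL hlip G hG Φmin Φmax hΦbd F R hF ε hR η hη0 hη T hT δbar g x
    hxX hg hVI
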